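/- arXiv:1112.3168 — 10 statements merged into one kernel-verified Lean document; each statement's English description precedes it below -/
import Mathlib

section
/- For every integer m ≥ 1, the set CBFS₂(2m+1) = {1·α : α a Dyck word of length 2m} is a cross-bifix-free set on BF₂(2m+1); that is, every word in CBFS₂(2m+1) is a bifix-free binary word of length 2m+1, and any two distinct words in CBFS₂(2m+1) are cross-bifix-free. -/
/-- A binary word (as a list of Booleans, `true` = 1, `false` = 0) is a Dyck word
if it has as many 1s as 0s and every prefix has at least as many 1s as 0s. -/
def IsDyck (w : List Bool) : Prop :=
  w.count true = w.count false ∧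
  ∀ p : List Bool, p <+: w → p.count false ≤ p.count true

/-- `DyckLen w n` : `w` is a Dyck word of length `n`. -/
def DyckLen (w : List Bool) (n : ℕ) : Prop := IsDyck w ∧ w.length = n

/-- A word is bifix-free if no nonempty proper prefix of it is also a suffix of it. -/
def BifixFree {A : Type*} (w : List A) : Prop :=
  ∀ p : List A, p ≠ [] → p <+: w → p ≠ w → ¬ p <:+ w

/-- Two (distinct, same-length) words are cross-bifix-free if no nonempty proper
prefix of either one is a suffix of the other. -/
def CrossBifixFree {A : Type*} (w w' : List A) : Prop :=
  (∀ p : List A, p ≠ [] → p <+: w → p ≠ w → ¬ p <:+ w') ∧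
  (∀ p : List A, p ≠ [] → p <+: w' → p ≠ w' → ¬ p <:+ w)

/-- The set of bifix-free binary words of length `n`. -/
def BF (n : ℕ) : Set (List Bool) := {w | w.length = n ∧ BifixFree w}

/-- `CBFS₂(2m+1)` : words `1·α` where `α` is a Dyck word of length `2m`. -/
def CBFSodd (m : ℕ) : Set (List Bool) :=
  {w | ∃ α : List Bool, DyckLen α (2 * m) ∧ w = true :: α}

/-- `CBFS₂(2m+2)` for even `m > 1` : words `α·1·β·0` with `α` a Dyck word of length `2i`,
`β` a Dyck word of length `2(m-i)`, `0 ≤ i ≤ m/2`. -/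
def CBFSevenE (m : ℕ) : Set (List Bool) :=
  {w | ∃ (i : ℕ) (α β : List Bool), i ≤ m / 2 ∧ DyckLen α (2 * i) ∧
    DyckLen β (2 * (m - i)) ∧ w = α ++ true :: β ++ [false]}

/-- `CBFS₂(2m+2)` for odd `m ≥ 1` : words `α·1·β·0` with `α` a Dyck word of length `2i`,
`β` a Dyck word of length `2(m-i)`, `0 ≤ i ≤ (m+1)/2`, excluding the words
`1·α'·0·1·β'·0` with `α'`, `β'` Dyck words of length `m-1`. -/
def CBFSevenO (m : ℕ) : Set (List Bool) :=
  {w | ∃ (i : ℕ) (α β : List Bool), i ≤ (m + 1) / 2 ∧ DyckLen α (2 * i) ∧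
    DyckLen β (2 * (m - i)) ∧ w = α ++ true :: β ++ [false]} \
  {w | ∃ α' β' : List Bool, DyckLen α' (m - 1) ∧ DyckLen β' (m - 1) ∧
    w = true :: α' ++ false :: true :: β' ++ [false]}

/-- For every `m ≥ 1`, `CBFS₂(2m+1)` is a cross-bifix-free set on `BF₂(2m+1)`. -/
theorem CBFSodd_crossBifixFree (m : ℕ) (hm : 1 ≤ m) :
    (∀ w ∈ CBFSodd m, w ∈ BF (2 * m + 1)) ∧
    (∀ w ∈ CBFSodd m, ∀ w' ∈ CBFSodd m, w ≠ w' → CrossBifixFree w w') := by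
  -- key lemma: a nonempty proper prefix of 1·α (α Dyck, len 2m) is never
  -- a suffix of 1·β (β Dyck, len 2m).
  have key : ∀ α β : List Bool, DyckLen α (2 * m) → DyckLen β (2 * m) →
      ∀ p : List Bool, p ≠ [] → p <+: (true :: α) → p ≠ (true :: α) →
      ¬ p <:+ (true :: β) := by
    rintro α β ⟨⟨hαc, hαp⟩, hαl⟩ ⟨⟨hβc, hβp⟩, hβl⟩ p hne hpre hprop hsuf
    -- p is strictly more trues than falses
    obtain ⟨t, ht⟩ := hpre
    rcases p with _ | ⟨b, p'⟩
    · exact absurd rfl hne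
    injection ht with h1 h2
    subst h1
    have hpre : (true :: p') <+: (true :: α) := ⟨t, by simpa using h2⟩
    have hp'α : p' <+: α := ⟨t, by simpa using h2⟩
    have hlt : p'.count false ≤ p'.count true := hαp p' hp'α
    -- p as suffix of 1·β: either p = 1·β or p suffix of β
    rcases List.suffix_cons_iff.mp hsuf with heq | hsufβ
    · -- then length p = length (1·α), so p = 1·α, contradiction
      exact hprop (hpre.eq_of_length (by rw [heq]; simp [hβl, hαl]))
    · -- p suffix of β: count false p ≥ count true p, but p = 1·p' has strictly more trues
      obtain ⟨t, ht⟩ := hsufβ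
      have htp : t <+: β := ⟨true :: p', ht⟩
      have h1 : t.count false ≤ t.count true := hβp t htp
      have h2 : β.count true = t.count true + (true :: p').count true := by
        rw [← ht, List.count_append]
      have h3 : β.count false = t.count false + (true :: p').count false := by
        rw [← ht, List.count_append]
      simp [List.count_cons] at h2 h3
      omega
  have mem : ∀ w ∈ CBFSodd m, w ∈ BF (2 * m + 1) := by
    rintro w ⟨α, hα, rfl⟩
    refine ⟨by simp [hα.2], ?_⟩
    intro p hne hpre hprop
    exact key α α hα hα p hne hpre hprop
  refine ⟨mem, ?_⟩
  rintro w ⟨α, hα, rfl⟩ w' ⟨β, hβ, rfl⟩ _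
  exact ⟨key α β hα hβ, key β α hβ hα⟩
end

section
/- For every integer m ≥ 1, the set CBFS₂(2m+1) is a non-expandable cross-bifix-free set on BF₂(2m+1); that is, for every bifix-free binary word γ of length 2m+1 with γ ∉ CBFS₂(2m+1), there exists ω ∈ CBFS₂(2m+1) such that some nonempty proper prefix of γ is a suffix of ω, or some nonempty proper prefix of ω is a suffix of γ. -/
namespace BinaryWord

def height (w : List Bool) : ℤ := w.count true - w.count false

def IsBallot (w : List Bool) : Prop := ∀ p, p <+: w → 0 ≤ height p

def Overlaps {A : Type*} (x y : List A) : Prop := ∃ p, p ≠ [] ∧ p <+: x ∧ p ≠ x ∧ p <:+ y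

@[simp] lemma height_nil : height [] = 0 := by simp [height]

@[simp] lemma height_cons (a : Bool) (w : List Bool) :
    height (a :: w) = (if a then 1 else -1) + height w := by
  cases a <;> simp [height] <;> ring

@[simp] lemma height_append (u v : List Bool) : height (u ++ v) = height u + height v := by
  simp only [height, List.count_append]; push_cast; ring

lemma height_add_two_mul_count_false (w : List Bool) :
    height w + 2 * w.count false = w.length := by
  induction w with
  | nil => simp
  | cons a w ih => cases a <;> simp <;> omega

lemma height_le_length (w : List Bool) : height w ≤ w.length := by
  have := height_add_two_mul_count_false w; omega

lemma isBallot_nil : IsBallot [] := by simp [IsBallot]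

lemma IsBallot.height_nonneg {w : List Bool} (hw : IsBallot w) : 0 ≤ height w :=
  hw w (List.prefix_refl w)

lemma isBallot_concat {w : List Bool} {a : Bool} :
    IsBallot (w ++ [a]) ↔ IsBallot w ∧ 0 ≤ height (w ++ [a]) := by
  simp only [IsBallot, List.prefix_concat_iff, or_imp, forall_and, forall_eq]
  exact and_comm

lemma IsBallot.append {u v : List Bool} (hu : IsBallot u) (hv : IsBallot v) :
    IsBallot (u ++ v) := by
  induction v using List.reverseRecOn with
  | nil => simpa
  | append_singleton v a ih =>
    rw [isBallot_concat] at hv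
    rw [← List.append_assoc, isBallot_concat, List.append_assoc, height_append]
    exact ⟨ih hv.1, add_nonneg hu.height_nonneg hv.2⟩

lemma isDyck_iff {w : List Bool} : IsDyck w ↔ IsBallot w ∧ height w = 0 := by
  simp only [IsDyck, IsBallot, height, sub_nonneg, sub_eq_zero, Nat.cast_le, Nat.cast_inj]
  exact and_comm

lemma _root_.IsDyck.length_eq {w : List Bool} (hw : IsDyck w) : w.length = 2 * w.count false := by
  have := height_add_two_mul_count_false w
  have := (isDyck_iff.1 hw).2
  omega

lemma isDyck_nil : IsDyck [] := isDyck_iff.2 ⟨isBallot_nil, height_nil⟩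

lemma _root_.IsDyck.cons_true_append_false {v : List Bool} (hv : IsDyck v) :
    IsDyck (true :: v ++ [false]) := by
  obtain ⟨hb, h0⟩ := isDyck_iff.1 hv
  have hone : IsBallot [true] := isBallot_concat.2 ⟨isBallot_nil, by simp⟩
  refine isDyck_iff.2 ⟨?_, by simp [h0]⟩
  rw [← List.singleton_append, isBallot_concat]
  exact ⟨hone.append hb, by simp [h0]⟩

lemma IsBallot.exists_dyckLen_prefix {m : ℕ} {t : List Bool} (hb : IsBallot t)
    (hlen : t.length + height t ≤ 2 * m) : ∃ α, DyckLen α (2 * m) ∧ t <+: α := by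
  obtain ⟨r, hr⟩ : ∃ r, t.length + r = 2 * m :=
    ⟨2 * m - t.length, by have := hb.height_nonneg; omega⟩
  induction r generalizing t with
  | zero => exact ⟨t, ⟨isDyck_iff.2 ⟨hb, by have := hb.height_nonneg; omega⟩, by omega⟩,
      List.prefix_refl t⟩
  | succ r ih =>
    obtain ⟨a, hba, hlena⟩ : ∃ a, IsBallot (t ++ [a]) ∧
        (t ++ [a]).length + height (t ++ [a]) ≤ 2 * m := by
      have := height_add_two_mul_count_false t
      rcases hb.height_nonneg.eq_or_lt with h0 | hpos
      · exact ⟨true, isBallot_concat.2 ⟨hb, by simp; omega⟩, by simp; omega⟩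
      · exact ⟨false, isBallot_concat.2 ⟨hb, by simp; omega⟩, by simp; omega⟩
    obtain ⟨α, hα, hpre⟩ := ih hba hlena (by simp; omega)
    exact ⟨α, hα, (List.prefix_append t [a]).trans hpre⟩

lemma _root_.IsDyck.exists_dyckLen_suffix {m : ℕ} {v : List Bool} (hv : IsDyck v)
    (hlen : v.length ≤ 2 * m) : ∃ α, DyckLen α (2 * m) ∧ v <:+ α := by
  obtain ⟨u, ⟨hu, hulen⟩, -⟩ :=
    isBallot_nil.exists_dyckLen_prefix (m := m - v.count false) (by simp)
  obtain ⟨hub, hu0⟩ := isDyck_iff.1 hu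
  obtain ⟨hvb, hv0⟩ := isDyck_iff.1 hv
  have := hv.length_eq
  exact ⟨u ++ v, ⟨isDyck_iff.2 ⟨hub.append hvb, by simp [hu0, hv0]⟩, by simp; omega⟩,
    List.suffix_append u v⟩

lemma isBallot_or_exists_isDyck_append_false (w : List Bool) :
    IsBallot w ∨ ∃ v r, IsDyck v ∧ w = v ++ false :: r := by
  induction w using List.reverseRecOn with
  | nil => exact Or.inl isBallot_nil
  | append_singleton w a ih =>
    rcases ih with hw | ⟨v, r, hv, rfl⟩
    · by_cases h : 0 ≤ height (w ++ [a])
      · exact Or.inl (isBallot_concat.2 ⟨hw, h⟩)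
      · have := hw.height_nonneg
        cases a
        · exact Or.inr ⟨w, [], isDyck_iff.2 ⟨hw, by simp at h; omega⟩, rfl⟩
        · simp at h; omega
    · exact Or.inr ⟨v, r ++ [a], hv, by simp⟩

lemma exists_append_true_isBallot_of_lt_height {w : List Bool} {h : ℕ}
    (hw : (h : ℤ) < height w) : ∃ u t, w = u ++ true :: t ∧ IsBallot t ∧ height t = h := by
  induction w using List.reverseRecOn generalizing h with
  | nil => simp at hw; omega
  | append_singleton w a ih =>
    simp only [height_append, height_cons, height_nil] at hw
    cases a
    · obtain ⟨u, t, rfl, ht, hth⟩ := ih (h := h + 1) (by push_cast; simp at hw; omega)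
      exact ⟨u, t ++ [false], by simp, isBallot_concat.2 ⟨ht, by simp [hth]⟩, by simp [hth]⟩
    · cases h with
      | zero => exact ⟨w, [], by simp, isBallot_nil, by simp⟩
      | succ h =>
        obtain ⟨u, t, rfl, ht, hth⟩ := ih (h := h) (by push_cast at hw; simp at hw; omega)
        exact ⟨u, t ++ [true], by simp, isBallot_concat.2 ⟨ht, by simp [hth]; omega⟩,
          by simp [hth]⟩

lemma exists_overlaps_of_head_false {m : ℕ} (hm : 1 ≤ m) {δ : List Bool}
    (hδ : δ.length = 2 * m) : ∃ ω ∈ CBFSodd m, Overlaps (false :: δ) ω := by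
  obtain ⟨α, hα, hsuf⟩ :=
    isDyck_nil.cons_true_append_false.exists_dyckLen_suffix (m := m) (by simp; omega)
  refine ⟨true :: α, ⟨α, hα, rfl⟩, [false], by simp, by simp, ?_, ?_⟩
  · intro h
    have : ([] : List Bool).length = δ.length := congrArg List.length (List.cons.inj h).2
    simp only [List.length_nil] at this
    omega
  · exact ((List.suffix_append [true] [false]).trans hsuf).trans (List.suffix_cons _ _)

lemma exists_overlaps_of_isDyck_prefix {m : ℕ} {γ p : List Bool}
    (hγ : γ.length = 2 * m + 1) (hp : IsDyck p) (hp0 : p ≠ []) (hpγ : p <+: γ) :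
    ∃ ω ∈ CBFSodd m, Overlaps γ ω := by
  have := hp.length_eq
  have := hpγ.length_le
  obtain ⟨α, hα, hsuf⟩ := hp.exists_dyckLen_suffix (m := m) (by omega)
  exact ⟨true :: α, ⟨α, hα, rfl⟩, p, hp0, hpγ, by rintro rfl; omega,
    hsuf.trans (List.suffix_cons _ _)⟩

lemma exists_overlaps_of_isBallot_tail {m : ℕ} {δ : List Bool} (hδ : δ.length = 2 * m)
    (hb : IsBallot δ) (hnd : ¬ IsDyck δ) : ∃ ω ∈ CBFSodd m, Overlaps ω (true :: δ) := by
  have hne : height δ ≠ 0 := fun h => hnd (isDyck_iff.2 ⟨hb, h⟩)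
  have := hb.height_nonneg
  have := height_add_two_mul_count_false δ
  obtain ⟨u, t, rfl, ht, htc⟩ :=
    exists_append_true_isBallot_of_lt_height (w := δ) (h := m - δ.count false) (by omega)
  have := height_le_length u
  simp only [height_append, height_cons, List.length_append, List.length_cons] at *
  obtain ⟨α, hα, hpre⟩ := ht.exists_dyckLen_prefix (m := m) (by omega)
  refine ⟨true :: α, ⟨α, hα, rfl⟩, true :: t, by simp, List.cons_prefix_cons.2 ⟨rfl, hpre⟩,
    ?_, (List.suffix_append u _).trans (List.suffix_cons _ _)⟩
  intro h
  have := congrArg List.length h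
  simp only [List.length_cons, hα.2] at this
  omega

end BinaryWord

open BinaryWord

/-- For every `m ≥ 1`, `CBFS₂(2m+1)` is a non-expandable cross-bifix-free set
on `BF₂(2m+1)`. -/
theorem CBFSodd_nonexpandable (m : ℕ) (hm : 1 ≤ m) (γ : List Bool)
    (hγ : γ ∈ BF (2 * m + 1)) (hγn : γ ∉ CBFSodd m) :
    ∃ ω ∈ CBFSodd m,
      (∃ p : List Bool, p ≠ [] ∧ p <+: γ ∧ p ≠ γ ∧ p <:+ ω) ∨
      (∃ p : List Bool, p ≠ [] ∧ p <+: ω ∧ p ≠ ω ∧ p <:+ γ) := by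
  obtain ⟨hlen, -⟩ := hγ
  rcases γ with _ | ⟨_ | _, δ⟩
  · simp at hlen
  · obtain ⟨ω, hω, h⟩ := exists_overlaps_of_head_false hm (by simpa using hlen)
    exact ⟨ω, hω, Or.inl h⟩
  · rcases isBallot_or_exists_isDyck_append_false δ with hδ | ⟨v, r, hv, rfl⟩
    · have hδlen : δ.length = 2 * m := by simpa using hlen
      obtain ⟨ω, hω, h⟩ := exists_overlaps_of_isBallot_tail hδlen hδ
        fun hd => hγn ⟨δ, ⟨hd, hδlen⟩, rfl⟩
      exact ⟨ω, hω, Or.inr h⟩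
    · obtain ⟨ω, hω, h⟩ := exists_overlaps_of_isDyck_prefix hlen hv.cons_true_append_false
        (List.cons_ne_nil _ _) (by simp)
      exact ⟨ω, hω, Or.inl h⟩
end

section
/- For every even integer m > 1, the set CBFS₂(2m+2) = {α·1·β·0 : α a Dyck word of length 2i, β a Dyck word of length 2(m−i), 0 ≤ i ≤ m/2} is a cross-bifix-free set on BF₂(2m+2); that is, every word in CBFS₂(2m+2) is a bifix-free binary word of length 2m+2, and any two distinct words in CBFS₂(2m+2) are cross-bifix-free. -/
lemma word_len {m i : ℕ} {α β : List Bool} (hi : i ≤ m / 2)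
    (hα : DyckLen α (2 * i)) (hβ : DyckLen β (2 * (m - i))) :
    (α ++ true :: β ++ [false]).length = 2 * m + 2 := by
  simp [hα.2, hβ.2]; omega

lemma prefix_prop {m i : ℕ} {α β p : List Bool}
    (hα : DyckLen α (2 * i)) (hβ : DyckLen β (2 * (m - i)))
    (hp : p <+: α ++ true :: β ++ [false]) (hne : p ≠ α ++ true :: β ++ [false]) :
    p.count false ≤ p.count true ∧ (p.count false = p.count true → p.length ≤ 2 * i) := by
  have hassoc : α ++ true :: β ++ [false] = α ++ (true :: (β ++ [false])) := by simp
  rw [hassoc] at hp hne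
  by_cases hle : p.length ≤ α.length
  · have hpa : p <+: α := List.prefix_of_prefix_length_le hp (α.prefix_append _) hle
    exact ⟨hα.1.2 p hpa, fun _ => hα.2 ▸ hpa.length_le⟩
  · push_neg at hle
    have hap : α <+: p := List.prefix_of_prefix_length_le (α.prefix_append _) hp hle.le
    obtain ⟨r, rfl⟩ := hap
    obtain ⟨t, ht⟩ := hp
    rw [List.append_assoc] at ht
    have ht' : r ++ t = true :: β ++ [false] := List.append_cancel_left ht
    have hrne : r ≠ [] := by
      rintro rfl; simp at hle
    obtain ⟨b, s, rfl⟩ := List.exists_cons_of_ne_nil hrne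
    have hb : b = true := by
      have := congrArg (fun l => l.head?) ht'
      simpa using this
    subst hb
    have hs : s <+: β ++ [false] := ⟨t, by simpa using ht'⟩
    by_cases hsl : s.length ≤ β.length
    · have hsβ : s <+: β := List.prefix_of_prefix_length_le hs (β.prefix_append _) hsl
      have h1 := hβ.1.2 s hsβ
      have h2 := hα.1.1
      constructor
      · simp [List.count_append, List.count_cons]
        omega
      · intro h
        exfalso
        simp [List.count_append, List.count_cons] at h
        omega
    · push_neg at hsl
      exfalso
      apply hne
      rcases hs with ⟨u, hu⟩
      have hlen2 : s.length + u.length = β.length + 1 := by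
        have := congrArg List.length hu
        simpa using this
      have hul : u = [] := by
        rw [← List.length_eq_zero_iff]
        omega
      subst hul
      rw [List.append_nil] at hu
      rw [hu]

lemma core {m : ℕ} (hm : 1 < m) {w w' : List Bool} (hw : w ∈ CBFSevenE m)
    (hw' : w' ∈ CBFSevenE m) :
    ∀ p : List Bool, p ≠ [] → p <+: w → p ≠ w → ¬ p <:+ w' := by
  obtain ⟨i, α, β, hi, hα, hβ, rfl⟩ := hw
  obtain ⟨i', α', β', hi', hα', hβ', rfl⟩ := hw'
  intro p hpne hp hpw hs
  obtain ⟨q, hq⟩ := hs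
  have hq' : q <+: α' ++ true :: β' ++ [false] := hq ▸ q.prefix_append p
  have hqne : q ≠ α' ++ true :: β' ++ [false] := by
    intro h
    have := congrArg List.length hq
    rw [h] at this
    simp at this
    exact hpne this
  have H1 := prefix_prop hα hβ hp hpw
  have H2 := prefix_prop hα' hβ' hq' hqne
  -- count equation
  have hct : q.count true + p.count true = (α' ++ true :: β' ++ [false]).count true := by
    rw [← hq, List.count_append]
  have hcf : q.count false + p.count false = (α' ++ true :: β' ++ [false]).count false := by
    rw [← hq, List.count_append]
  have hbal : (α' ++ true :: β' ++ [false]).count true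
      = (α' ++ true :: β' ++ [false]).count false := by
    have h1 := hα'.1.1
    have h2 := hβ'.1.1
    simp [List.count_append, List.count_cons]
    omega
  have hpc : p.count false = p.count true := by omega
  have hqc : q.count false = q.count true := by omega
  have hpl := H1.2 hpc
  have hql := H2.2 hqc
  have hlen : q.length + p.length = 2 * m + 2 := by
    have := congrArg List.length hq
    rw [word_len hi' hα' hβ'] at this
    simp at this
    omega
  omega

/-- For every even `m > 1`, `CBFS₂(2m+2)` is a cross-bifix-free set
on `BF₂(2m+2)`. -/
theorem CBFSevenE_crossBifixFree (m : ℕ) (hm : 1 < m) (hme : Even m) :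
    (∀ w ∈ CBFSevenE m, w ∈ BF (2 * m + 2)) ∧
    (∀ w ∈ CBFSevenE m, ∀ w' ∈ CBFSevenE m, w ≠ w' → CrossBifixFree w w') := by
  have memBF : ∀ w ∈ CBFSevenE m, w ∈ BF (2 * m + 2) := by
    rintro w hw
    refine ⟨?_, ?_⟩
    · obtain ⟨i, α, β, hi, hα, hβ, rfl⟩ := hw
      exact word_len hi hα hβ
    · intro p h1 h2 h3
      exact core hm hw hw p h1 h2 h3
  refine ⟨memBF, fun w hw w' hw' _ => ⟨?_, ?_⟩⟩
  · intro p h1 h2 h3; exact core hm hw hw' p h1 h2 h3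
  · intro p h1 h2 h3; exact core hm hw' hw p h1 h2 h3
end

section
/- For every even integer m > 1, the cardinality of CBFS₂(2m+2) equals the sum over i from 0 to m/2 of C_i·C_{m−i}, where C_k denotes the k-th Catalan number. -/
open List DyckStep

def b2s : Bool → DyckStep := fun b => bif b then U else D
def s2b : DyckStep → Bool := fun s => match s with | U => true | D => false

lemma b2s_inj : Function.Injective b2s := by
  intro a b h; cases a <;> cases b <;> simp_all [b2s]
lemma s2b_inj : Function.Injective s2b := by
  intro a b h; cases a <;> cases b <;> simp_all [s2b]
lemma s2b_b2s (b : Bool) : s2b (b2s b) = b := by cases b <;> rfl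
lemma b2s_s2b (s : DyckStep) : b2s (s2b s) = s := by cases s <;> rfl


lemma count_tf (w : List Bool) : w.count true + w.count false = w.length := by
  induction w with
  | nil => simp
  | cons a t ih => cases a <;> simp [List.count_cons] <;> omega

lemma count_map_b2s_U (w : List Bool) : (w.map b2s).count U = w.count true :=
  List.count_map_of_injective w b2s b2s_inj true
lemma count_map_b2s_D (w : List Bool) : (w.map b2s).count D = w.count false :=
  List.count_map_of_injective w b2s b2s_inj false
lemma count_map_s2b_t (l : List DyckStep) : (l.map s2b).count true = l.count U :=
  List.count_map_of_injective l s2b s2b_inj U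
lemma count_map_s2b_f (l : List DyckStep) : (l.map s2b).count false = l.count D :=
  List.count_map_of_injective l s2b s2b_inj D

noncomputable def dyckEquiv (k : ℕ) :
    {w : List Bool // DyckLen w (2 * k)} ≃ {p : DyckWord // p.semilength = k} where
  toFun w := ⟨⟨w.1.map b2s, by
      rw [count_map_b2s_U, count_map_b2s_D]; exact w.2.1.1, fun i => by
      rw [← List.map_take, count_map_b2s_U, count_map_b2s_D]
      exact w.2.1.2 _ (List.take_prefix i w.1)⟩, by
    have h1 := w.2.1.1
    have h2 := count_tf w.1
    have h3 := w.2.2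
    simp only [DyckWord.semilength, count_map_b2s_U]
    omega⟩
  invFun p := ⟨p.1.toList.map s2b, ⟨⟨by
      rw [count_map_s2b_t, count_map_s2b_f]; exact p.1.count_U_eq_count_D, fun q hq => by
      obtain ⟨i, rfl⟩ : ∃ i, q = (p.1.toList.map s2b).take i :=
        ⟨q.length, (List.prefix_iff_eq_take.mp hq)⟩
      rw [← List.map_take, count_map_s2b_t, count_map_s2b_f]
      exact p.1.count_D_le_count_U i⟩, by
    rw [List.length_map, ← p.1.two_mul_semilength_eq_length, p.2]⟩⟩
  left_inv w := by
    ext1; simp only [List.map_map]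
    rw [show s2b ∘ b2s = id from funext s2b_b2s, List.map_id]
  right_inv p := by
    ext1; ext1; simp only [List.map_map]
    rw [show b2s ∘ s2b = id from funext b2s_s2b, List.map_id]

noncomputable instance dyckFintype (k : ℕ) : Fintype {w : List Bool // DyckLen w (2 * k)} :=
  Fintype.ofEquiv _ (dyckEquiv k).symm

lemma card_dyck (k : ℕ) : Fintype.card {w : List Bool // DyckLen w (2 * k)} = catalan k := by
  rw [Fintype.card_congr (dyckEquiv k), DyckWord.card_dyckWord_semilength_eq_catalan]

lemma key_lt {α₁ β₁ α₂ β₂ : List Bool} (hα₁ : IsDyck α₁) (hα₂ : IsDyck α₂) (hβ₁ : IsDyck β₁)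
    (e : α₁ ++ true :: β₁ = α₂ ++ true :: β₂)
    (hl : α₁.length < α₂.length) : False := by
  have h1 : α₁ <+: α₂ ++ true :: β₂ := ⟨true :: β₁, e⟩
  have hpre := List.prefix_of_prefix_length_le h1 (List.prefix_append _ _) hl.le
  obtain ⟨γ, rfl⟩ := hpre
  have e2 : true :: β₁ = γ ++ true :: β₂ := by
    apply List.append_cancel_left (as := α₁)
    simpa [List.append_assoc] using e
  cases γ with
  | nil => simp at hl
  | cons c γ' =>
    obtain ⟨hc, e3⟩ := List.cons.inj e2
    subst hc
    have c1 := hα₁.1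
    have c2 := hα₂.1
    simp only [List.count_append, List.count_cons] at c2
    simp at c2
    have h3 := hβ₁.2 γ' ⟨true :: β₂, e3.symm⟩
    omega

lemma key {α₁ β₁ α₂ β₂ : List Bool} (hα₁ : IsDyck α₁) (hα₂ : IsDyck α₂)
    (hβ₁ : IsDyck β₁) (hβ₂ : IsDyck β₂)
    (e : α₁ ++ true :: β₁ ++ [false] = α₂ ++ true :: β₂ ++ [false]) :
    α₁ = α₂ ∧ β₁ = β₂ := by
  have e' : α₁ ++ true :: β₁ = α₂ ++ true :: β₂ := (List.append_inj' e rfl).1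
  have hlen : α₁.length = α₂.length := by
    by_contra h
    rcases Nat.lt_or_ge α₁.length α₂.length with hl | hl
    · exact key_lt hα₁ hα₂ hβ₁ e' hl
    · exact key_lt hα₂ hα₁ hβ₂ e'.symm (by omega)
  obtain ⟨ea, eb⟩ := List.append_inj e' hlen
  exact ⟨ea, (List.cons.inj eb).2⟩


def SigT (m : ℕ) :=
  Σ i : Fin (m / 2 + 1),
    {α : List Bool // DyckLen α (2 * (i : ℕ))} × {β : List Bool // DyckLen β (2 * (m - (i : ℕ)))}

noncomputable instance (m : ℕ) : Fintype (SigT m) := by unfold SigT; infer_instance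

def Fm (m : ℕ) : SigT m → List Bool := fun x => x.2.1.1 ++ true :: x.2.2.1 ++ [false]

lemma Fm_inj (m : ℕ) : Function.Injective (Fm m) := by
  rintro ⟨⟨i₁, hi₁⟩, ⟨α₁, hα₁⟩, ⟨β₁, hβ₁⟩⟩ ⟨⟨i₂, hi₂⟩, ⟨α₂, hα₂⟩, ⟨β₂, hβ₂⟩⟩ h
  obtain ⟨ea, eb⟩ := key hα₁.1 hα₂.1 hβ₁.1 hβ₂.1 h
  have h1 := hα₁.2
  have h2 := hα₂.2
  simp only [Fin.val_mk] at h1 h2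
  have hi : i₁ = i₂ := by subst ea; omega
  subst hi; subst ea; subst eb; rfl

lemma range_Fm (m : ℕ) : Set.range (Fm m) = CBFSevenE m := by
  ext w
  constructor
  · rintro ⟨⟨⟨i, hi⟩, ⟨α, hα⟩, ⟨β, hβ⟩⟩, rfl⟩
    exact ⟨i, α, β, by omega, hα, hβ, rfl⟩
  · rintro ⟨i, α, β, hi, hα, hβ, rfl⟩
    exact ⟨⟨⟨i, by omega⟩, ⟨α, hα⟩, ⟨β, hβ⟩⟩, rfl⟩


/-- For every even `m > 1`,
`|CBFS₂(2m+2)| = ∑_{i=0}^{m/2} C_i · C_{m-i}`. -/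
theorem CBFSevenE_card (m : ℕ) (hm : 1 < m) (hme : Even m) :
    (CBFSevenE m).ncard = ∑ i ∈ Finset.range (m / 2 + 1), catalan i * catalan (m - i) := by
  calc (CBFSevenE m).ncard = Nat.card (CBFSevenE m) := (Nat.card_coe_set_eq _).symm
    _ = Nat.card (Set.range (Fm m)) := by rw [range_Fm]
    _ = Nat.card (SigT m) := Nat.card_range_of_injective (Fm_inj m)
    _ = Fintype.card (SigT m) := Nat.card_eq_fintype_card
    _ = ∑ i : Fin (m / 2 + 1), catalan i * catalan (m - i) := by
        rw [show Fintype.card (SigT m) = _ from Fintype.card_sigma]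
        exact Finset.sum_congr rfl fun i _ => by rw [Fintype.card_prod, card_dyck, card_dyck]
    _ = ∑ i ∈ Finset.range (m / 2 + 1), catalan i * catalan (m - i) :=
        Fin.sum_univ_eq_sum_range (fun i => catalan i * catalan (m - i)) _
end

section
/- For every odd integer m ≥ 1, the set CBFS₂(2m+2) = {α·1·β·0 : α a Dyck word of length 2i, β a Dyck word of length 2(m−i), 0 ≤ i ≤ (m+1)/2} \ {1·α'·0·1·β'·0 : α', β' Dyck words of length m−1} is a cross-bifix-free set on BF₂(2m+2); that is, every word in CBFS₂(2m+2) is a bifix-free binary word of length 2m+2, and any two distinct words in CBFS₂(2m+2) are cross-bifix-free. -/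
/-!
Write `w = α·1·β·0` with `α`, `β` Dyck words. Every prefix of `w` has at least as many 1s as
0s, with equality only for `w` itself and the prefixes of `α`; dually every suffix has at least
as many 0s as 1s, and a nonempty balanced one ends with the block `1·β·0`. So a nonempty proper
prefix `p` of `w` that is a suffix of `w' = α'·1·β'·0` is balanced, lies inside `α`, and contains
`1·β'·0`. For odd `m` the bound `i ≤ (m+1)/2` makes `|α| ≤ m + 1 ≤ |1·β'·0|`, so
`α = p = 1·β'·0` with `|β'| = |β| = m - 1`: `w` is one of the excluded words.
-/

namespace List

theorem prefix_append_cases {α : Type*} {q l₁ l₂ : List α} (h : q <+: l₁ ++ l₂) :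
    q <+: l₁ ∨ ∃ s, s <+: l₂ ∧ q = l₁ ++ s := by
  rcases prefix_or_prefix_of_prefix h (prefix_append l₁ l₂) with h' | ⟨s, rfl⟩
  · exact Or.inl h'
  · exact Or.inr ⟨s, (prefix_append_right_inj l₁).1 h, rfl⟩

end List

open List

namespace IsDyck

variable {α β : List Bool}

theorem prefix_block_cases (hβ : IsDyck β) {s : List Bool}
    (hs : s <+: true :: β ++ [false]) :
    s = [] ∨ s = true :: β ++ [false] ∨ s.count false < s.count true := by
  rcases prefix_concat_iff.1 hs with rfl | hs
  · exact Or.inr (Or.inl rfl)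
  rcases prefix_cons_iff.1 hs with rfl | ⟨t, rfl, ht⟩
  · exact Or.inl rfl
  · have := hβ.2 t ht
    rw [count_cons_self, count_cons_of_ne (by decide)]
    omega

theorem prefix_cases (hα : IsDyck α) (hβ : IsDyck β) {q : List Bool}
    (hq : q <+: α ++ true :: β ++ [false]) :
    q <+: α ∨ q = α ++ true :: β ++ [false] ∨ q.count false < q.count true := by
  rw [append_assoc] at hq
  rcases prefix_append_cases hq with hqα | ⟨s, hs, rfl⟩
  · exact Or.inl hqα
  rcases hβ.prefix_block_cases hs with rfl | rfl | hlt
  · exact Or.inl (by simp)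
  · exact Or.inr (Or.inl (by simp))
  · simp only [count_append, hα.1]
    omega

theorem count_true_eq_count_false (hα : IsDyck α) (hβ : IsDyck β) :
    (α ++ true :: β ++ [false]).count true = (α ++ true :: β ++ [false]).count false := by
  simp [count_append, hα.1, hβ.1]

theorem count_false_le_of_prefix (hα : IsDyck α) (hβ : IsDyck β) {q : List Bool}
    (hq : q <+: α ++ true :: β ++ [false]) : q.count false ≤ q.count true := by
  rcases prefix_cases hα hβ hq with hqα | rfl | hlt
  · exact hα.2 q hqα
  · exact (count_true_eq_count_false hα hβ).ge
  · exact hlt.le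

theorem prefix_of_balanced_prefix (hα : IsDyck α) (hβ : IsDyck β) {q : List Bool}
    (hq : q <+: α ++ true :: β ++ [false]) (hqw : q ≠ α ++ true :: β ++ [false])
    (hbal : q.count false = q.count true) : q <+: α := by
  rcases prefix_cases hα hβ hq with hqα | hqw' | hlt
  · exact hqα
  · exact absurd hqw' hqw
  · omega

theorem count_true_le_of_suffix (hα : IsDyck α) (hβ : IsDyck β) {p : List Bool}
    (hp : p <:+ α ++ true :: β ++ [false]) : p.count true ≤ p.count false := by
  obtain ⟨q, hw⟩ := hp
  have hq := count_false_le_of_prefix hα hβ ⟨p, hw⟩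
  have hbal := count_true_eq_count_false hα hβ
  rw [← hw, count_append, count_append] at hbal
  omega

theorem block_suffix_of_balanced_suffix (hα : IsDyck α) (hβ : IsDyck β) {p : List Bool}
    (hp : p <:+ α ++ true :: β ++ [false]) (hne : p ≠ [])
    (hpbal : p.count true = p.count false) : true :: β ++ [false] <:+ p := by
  obtain ⟨q, hw⟩ := hp
  have hqw : q ≠ α ++ true :: β ++ [false] := by
    rintro rfl
    exact hne (by simpa using hw)
  have hqbal : q.count false = q.count true := by
    have hbal := count_true_eq_count_false hα hβ
    rw [← hw, count_append, count_append] at hbal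
    omega
  obtain ⟨γ, rfl⟩ := prefix_of_balanced_prefix hα hβ ⟨p, hw⟩ hqw hqbal
  exact ⟨γ, append_cancel_left (as := q) (by simpa using hw.symm)⟩

theorem prefix_and_block_suffix_of_overlap {α' β' p : List Bool} (hα : IsDyck α) (hβ : IsDyck β)
    (hα' : IsDyck α') (hβ' : IsDyck β') (hne : p ≠ [])
    (hpre : p <+: α ++ true :: β ++ [false]) (hpw : p ≠ α ++ true :: β ++ [false])
    (hsuf : p <:+ α' ++ true :: β' ++ [false]) :
    p <+: α ∧ true :: β' ++ [false] <:+ p := by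
  have hle := count_false_le_of_prefix hα hβ hpre
  have hge := count_true_le_of_suffix hα' hβ' hsuf
  exact ⟨prefix_of_balanced_prefix hα hβ hpre hpw (by omega),
    block_suffix_of_balanced_suffix hα' hβ' hsuf hne (by omega)⟩

end IsDyck

namespace CBFSevenO

variable {m : ℕ} {w w' : List Bool}

theorem length_eq (hmo : Odd m) (hw : w ∈ CBFSevenO m) : w.length = 2 * m + 2 := by
  obtain ⟨⟨i, α, β, hi, ⟨-, hαl⟩, ⟨-, hβl⟩, rfl⟩, -⟩ := hw
  obtain ⟨k, rfl⟩ := hmo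
  simp only [length_append, length_cons, length_nil]
  omega

theorem not_suffix_of_prefix (hmo : Odd m) (hw : w ∈ CBFSevenO m) (hw' : w' ∈ CBFSevenO m)
    {p : List Bool} (hne : p ≠ []) (hpre : p <+: w) (hpw : p ≠ w) : ¬ p <:+ w' := by
  intro hsuf
  obtain ⟨⟨i, α, β, hi, ⟨hα, hαl⟩, ⟨hβ, hβl⟩, rfl⟩, hexcl⟩ := hw
  obtain ⟨⟨i', α', β', hi', ⟨hα', -⟩, ⟨hβ', hβ'l⟩, rfl⟩, -⟩ := hw'
  obtain ⟨hpα, hblock⟩ :=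
    IsDyck.prefix_and_block_suffix_of_overlap hα hβ hα' hβ' hne hpre hpw hsuf
  have hpα_len := hpα.length_le
  have hblock_len := hblock.length_le
  simp only [length_append, length_cons, length_nil] at hblock_len
  obtain ⟨k, rfl⟩ := hmo
  have hpα : p = α := hpα.eq_of_length (by omega)
  have hblock : true :: β' ++ [false] = p :=
    hblock.eq_of_length (by simp only [length_append, length_cons, length_nil]; omega)
  subst hpα
  exact hexcl ⟨β', β, ⟨hβ', by omega⟩, ⟨hβ, by omega⟩, by simp [← hblock]⟩

end CBFSevenO

theorem CBFSevenO_crossBifixFree_general (m : ℕ) (hmo : Odd m) :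
    (∀ w ∈ CBFSevenO m, w ∈ BF (2 * m + 2)) ∧
    (∀ w ∈ CBFSevenO m, ∀ w' ∈ CBFSevenO m, w ≠ w' → CrossBifixFree w w') := by
  have hoverlap : ∀ w ∈ CBFSevenO m, ∀ w' ∈ CBFSevenO m,
      ∀ p : List Bool, p ≠ [] → p <+: w → p ≠ w → ¬ p <:+ w' :=
    fun _ hw _ hw' _ => CBFSevenO.not_suffix_of_prefix hmo hw hw'
  exact ⟨fun w hw => ⟨CBFSevenO.length_eq hmo hw, hoverlap w hw w hw⟩,
    fun w hw w' hw' _ => ⟨hoverlap w hw w' hw', hoverlap w' hw' w hw⟩⟩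

/-- For every odd `m ≥ 1`, `CBFS₂(2m+2)` is a cross-bifix-free set
on `BF₂(2m+2)`. -/
theorem CBFSevenO_crossBifixFree (m : ℕ) (hm : 1 ≤ m) (hmo : Odd m) :
    (∀ w ∈ CBFSevenO m, w ∈ BF (2 * m + 2)) ∧
    (∀ w ∈ CBFSevenO m, ∀ w' ∈ CBFSevenO m, w ≠ w' → CrossBifixFree w w') :=
  CBFSevenO_crossBifixFree_general m hmo
end

section
/- For every odd integer m ≥ 1, the cardinality of CBFS₂(2m+2) equals (the sum over i from 0 to (m+1)/2 of C_i·C_{m−i}) minus (C_{(m−1)/2})², where C_k denotes the k-th Catalan number. -/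
open Set

def dyckStepEquivBool : DyckStep ≃ Bool where
  toFun | .U => true | .D => false
  invFun | true => .U | false => .D
  left_inv s := by cases s <;> rfl
  right_inv b := by cases b <;> rfl

def dyckWords (n : ℕ) : Set (List Bool) := {w | DyckLen w n}

lemma dyckWords_finite (n : ℕ) : (dyckWords n).Finite :=
  (List.finite_length_eq Bool n).subset fun _ hw => hw.2

lemma isDyck_map_dyckStepEquivBool (p : DyckWord) : IsDyck (p.toList.map dyckStepEquivBool) := by
  have hcount (l : List DyckStep) (s : DyckStep) :=
    List.count_map_of_injective l _ dyckStepEquivBool.injective s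
  refine ⟨?_, fun q hq => ?_⟩
  · exact (hcount p.toList .U).trans (p.count_U_eq_count_D.trans (hcount p.toList .D).symm)
  · rw [List.prefix_iff_eq_take.mp hq, ← List.map_take]
    exact (hcount _ .D).trans_le ((p.count_D_le_count_U _).trans (hcount _ .U).symm.le)

lemma dyckWords_two_mul_eq_image (n : ℕ) :
    dyckWords (2 * n) =
      (fun p : DyckWord => p.toList.map dyckStepEquivBool) '' {p | p.semilength = n} := by
  have hcount (l : List Bool) (b : Bool) :=
    List.count_map_of_injective l _ dyckStepEquivBool.symm.injective b
  ext w
  constructor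
  · rintro ⟨hw, hlen⟩
    let p : DyckWord :=
      { toList := w.map dyckStepEquivBool.symm
        count_U_eq_count_D := (hcount w true).trans (hw.1.trans (hcount w false).symm)
        count_D_le_count_U := fun i => by
          rw [← List.map_take]
          exact (hcount _ false).trans_le
            ((hw.2 _ (List.take_prefix i w)).trans (hcount _ true).symm.le) }
    have hp : p.toList.map dyckStepEquivBool = w := by
      change (w.map dyckStepEquivBool.symm).map dyckStepEquivBool = w
      simp [List.map_map]
    refine ⟨p, ?_, hp⟩
    have := p.two_mul_semilength_eq_length
    rw [← hp, List.length_map] at hlen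
    exact Nat.eq_of_mul_eq_mul_left two_pos (this.trans hlen)
  · rintro ⟨p, rfl, rfl⟩
    exact ⟨isDyck_map_dyckStepEquivBool p, by
      rw [List.length_map, p.two_mul_semilength_eq_length]⟩

lemma ncard_dyckWords_two_mul (n : ℕ) : (dyckWords (2 * n)).ncard = catalan n := by
  have hinj : Function.Injective fun p : DyckWord => p.toList.map dyckStepEquivBool :=
    fun p q h => DyckWord.ext ((List.map_injective_iff.mpr dyckStepEquivBool.injective) h)
  rw [dyckWords_two_mul_eq_image, ncard_image_of_injective _ hinj, ← Nat.card_coe_set_eq]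
  exact (Nat.card_eq_fintype_card (α := {p : DyckWord // p.semilength = n})).trans
    (DyckWord.card_dyckWord_semilength_eq_catalan n)

lemma IsDyck.nest {α : List Bool} (h : IsDyck α) : IsDyck (true :: α ++ [false]) := by
  refine ⟨by simp [h.1], fun p hp => ?_⟩
  rcases List.prefix_cons_iff.mp hp with rfl | ⟨q, rfl, hq⟩
  · simp
  rcases List.prefix_concat_iff.mp hq with rfl | hq
  · simp [h.1]
  · simpa using (h.2 q hq).trans (Nat.le_succ _)

def appendNest (α β : List Bool) : List Bool := α ++ true :: β ++ [false]

/-- The height profile of `α·1·β·0` returns to zero only inside `α` and at the very end, so `α`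
is its longest balanced prefix followed by a `1`. -/
lemma length_le_of_appendNest_eq {α β α' β' : List Bool} (hα : IsDyck α) (hβ : IsDyck β)
    (hα' : IsDyck α') (h : appendNest α β = appendNest α' β') : α'.length ≤ α.length := by
  by_contra! hlt
  simp only [appendNest, List.append_assoc] at h
  obtain ⟨t, rfl⟩ : α <+: α' :=
    List.prefix_of_prefix_length_le ⟨_, h⟩ (List.prefix_append _ _) hlt.le
  simp only [List.append_assoc, List.append_cancel_left_eq, List.cons_append] at h
  rcases t with _ | ⟨b, d⟩
  · simp at hlt
  obtain ⟨rfl, hd⟩ := List.cons_eq_cons.mp h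
  have hdβ : d <+: β := by
    refine List.prefix_of_prefix_length_le ⟨_, hd.symm⟩ (List.prefix_append _ _) ?_
    have := congrArg List.length hd
    simp at this
    omega
  have hbal := hα'.1
  simp [List.count_append] at hbal
  have := hα.1
  have := hβ.2 d hdβ
  omega

lemma appendNest_inj {α β α' β' : List Bool} (hα : IsDyck α) (hβ : IsDyck β) (hα' : IsDyck α')
    (hβ' : IsDyck β') : appendNest α β = appendNest α' β' ↔ α = α' ∧ β = β' := by
  refine ⟨fun h => ?_, fun h => h.1 ▸ h.2 ▸ rfl⟩
  have hlen := (length_le_of_appendNest_eq hα hβ hα' h).antisymm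
    (length_le_of_appendNest_eq hα' hβ' hα h.symm)
  simp only [appendNest, List.append_assoc] at h
  obtain ⟨rfl, h⟩ := List.append_inj h hlen.symm
  simpa using h

lemma ncard_image2_appendNest {s t : Set (List Bool)} (hs : ∀ α ∈ s, IsDyck α)
    (ht : ∀ β ∈ t, IsDyck β) : (image2 appendNest s t).ncard = s.ncard * t.ncard := by
  rw [← image_prod, InjOn.ncard_image, ncard_prod]
  rintro ⟨α, β⟩ ⟨hα, hβ⟩ ⟨α', β'⟩ ⟨hα', hβ'⟩ h
  simpa using (appendNest_inj (hs α hα) (ht β hβ) (hs α' hα') (ht β' hβ')).mp h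

lemma ncard_biUnion_image2_appendNest (s : Finset ℕ) (f : ℕ → ℕ) :
    (⋃ i ∈ (s : Set ℕ), image2 appendNest (dyckWords (2 * i)) (dyckWords (2 * f i))).ncard =
      ∑ i ∈ s, catalan i * catalan (f i) := by
  rw [s.finite_toSet.ncard_biUnion, finsum_mem_coe_finset]
  · refine Finset.sum_congr rfl fun i _ => ?_
    rw [ncard_image2_appendNest (fun _ h => h.1) (fun _ h => h.1), ncard_dyckWords_two_mul,
      ncard_dyckWords_two_mul]
  · exact fun i _ => (dyckWords_finite _).image2 _ (dyckWords_finite _)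
  · rintro i - j - hij
    refine disjoint_left.mpr ?_
    rintro _ ⟨α, hα, β, hβ, rfl⟩ ⟨α', hα', β', hβ', h⟩
    obtain ⟨rfl, -⟩ := (appendNest_inj hα'.1 hβ'.1 hα.1 hβ.1).mp h
    exact hij (by have := hα.2; have := hα'.2; omega)

lemma nest_image_dyckWords_subset (n : ℕ) :
    (fun α => true :: α ++ [false]) '' dyckWords n ⊆ dyckWords (n + 2) := by
  rintro _ ⟨α, hα, rfl⟩
  exact ⟨hα.1.nest, by simp [hα.2]⟩

theorem CBFSevenO_card_general (m : ℕ) (hmo : Odd m) :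
    (CBFSevenO m).ncard =
      (∑ i ∈ Finset.range ((m + 1) / 2 + 1), catalan i * catalan (m - i)) -
        catalan ((m - 1) / 2) ^ 2 := by
  obtain ⟨k, rfl⟩ := hmo
  have hhalf : (2 * k + 1 + 1) / 2 = k + 1 := by omega
  set S := ⋃ i ∈ (Finset.range (k + 2) : Set ℕ),
    image2 appendNest (dyckWords (2 * i)) (dyckWords (2 * (2 * k + 1 - i)))
  set E := image2 appendNest ((fun α => true :: α ++ [false]) '' dyckWords (2 * k))
    (dyckWords (2 * k))
  have hCBFS : CBFSevenO (2 * k + 1) = S \ E := by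
    ext w
    simp [CBFSevenO, S, E, appendNest, dyckWords, Nat.lt_succ_iff, eq_comm (a := w), hhalf]
  have hES : E ⊆ S := by
    have hpiece : E ⊆ image2 appendNest (dyckWords (2 * (k + 1)))
        (dyckWords (2 * (2 * k + 1 - (k + 1)))) := by
      rw [show 2 * (2 * k + 1 - (k + 1)) = 2 * k by omega]
      exact image2_subset_right (nest_image_dyckWords_subset _)
    exact hpiece.trans (subset_biUnion_of_mem (u := fun i => image2 appendNest
      (dyckWords (2 * i)) (dyckWords (2 * (2 * k + 1 - i)))) (by simp))
  have hE : E.ncard = catalan k ^ 2 := by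
    rw [ncard_image2_appendNest (fun α hα => (nest_image_dyckWords_subset _ hα).1)
      (fun β hβ => hβ.1), ncard_image_of_injective _ (fun α α' h => by simpa using h),
      ncard_dyckWords_two_mul, sq]
  have hEfin : E.Finite := ((dyckWords_finite _).image _).image2 _ (dyckWords_finite _)
  rw [hCBFS, ncard_sdiff hES hEfin, ncard_biUnion_image2_appendNest, hE, hhalf,
    show (2 * k + 1 - 1) / 2 = k by omega]

/-- For every odd `m ≥ 1`,
`|CBFS₂(2m+2)| = (∑_{i=0}^{(m+1)/2} C_i · C_{m-i}) - (C_{(m-1)/2})²`. -/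
theorem CBFSevenO_card (m : ℕ) (hm : 1 ≤ m) (hmo : Odd m) :
    (CBFSevenO m).ncard =
      (∑ i ∈ Finset.range ((m + 1) / 2 + 1), catalan i * catalan (m - i)) -
        catalan ((m - 1) / 2) ^ 2 :=
  CBFSevenO_card_general m hmo
end

section
/- Let m > 1 be even, let α be a nonempty Dyck word of length 2i with 0 < i ≤ m/2, and let β be a Dyck word of length 2(m−i). Then the word ω = α·1·β·0 is bifix-free. -/
lemma pref_split {A : Type*} {a b r : List A} (h : r <+: a ++ b) :
    r <+: a ∨ ∃ s, s <+: b ∧ r = a ++ s := by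
  induction a generalizing r with
  | nil => exact Or.inr ⟨r, h, rfl⟩
  | cons x a ih =>
    cases r with
    | nil => exact Or.inl (List.nil_prefix)
    | cons y r =>
      obtain ⟨t, ht⟩ := h
      injection ht with h1 h2
      subst h1
      rcases ih ⟨t, h2⟩ with h | ⟨s, hs, rfl⟩
      · exact Or.inl (List.cons_prefix_cons.mpr ⟨rfl, h⟩)
      · exact Or.inr ⟨s, hs, rfl⟩

/-- For even `m > 1`, a nonempty Dyck word `α` of length `2i` with
`0 < i ≤ m/2`, and a Dyck word `β` of length `2(m-i)`, the word `ω = α·1·β·0`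
is bifix-free. -/
theorem dyck_one_dyck_zero_bifixFree (m i : ℕ) (hm : 1 < m) (hme : Even m)
    (hi : 0 < i) (him : i ≤ m / 2) (α β : List Bool) (hα : DyckLen α (2 * i))
    (hαne : α ≠ []) (hβ : DyckLen β (2 * (m - i))) :
    BifixFree (α ++ true :: β ++ [false]) := by
  obtain ⟨⟨hαc, hαp⟩, hαl⟩ := hα
  obtain ⟨⟨hβc, hβp⟩, hβl⟩ := hβ
  set ω := α ++ true :: β ++ [false] with hω
  -- every prefix of ω has count false ≤ count true
  have mono : ∀ r : List Bool, r <+: ω → r.count false ≤ r.count true := by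
    intro r hr
    rcases pref_split hr with h | ⟨u, hu, rfl⟩
    · rcases pref_split h with h' | ⟨s, hs, rfl⟩
      · exact hαp r h'
      · cases s with
        | nil => simpa using hαp α List.prefix_rfl
        | cons b s' =>
          obtain ⟨hb, hs'⟩ := List.cons_prefix_cons.mp hs
          subst hb
          have := hβp s' hs'
          simp [List.count_append, List.count_cons]
          omega
    · have hu' : u = [] ∨ u = [false] := by
        rcases hu with ⟨t, ht⟩
        cases u with
        | nil => exact Or.inl rfl
        | cons c u' =>
          injection ht with h1 h2
          subst h1
          simp at h2
          simp [h2.1]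
      rcases hu' with rfl | rfl <;>
        simp [List.count_append, List.count_cons, hαc, hβc] <;> omega
  have key : ∀ r : List Bool, r <+: ω → r ≠ ω →
      r.count false = r.count true → r <+: α := by
    intro r hr hne hbal
    rcases pref_split hr with h | ⟨u, hu, rfl⟩
    · rcases pref_split h with h' | ⟨s, hs, rfl⟩
      · exact h'
      · cases s with
        | nil => simp
        | cons b s' =>
          obtain ⟨hb, hs'⟩ := List.cons_prefix_cons.mp hs
          subst hb
          have := hβp s' hs'
          simp [List.count_append, List.count_cons, hαc] at hbal
          omega
    · have hu' : u = [] ∨ u = [false] := by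
        rcases hu with ⟨t, ht⟩
        cases u with
        | nil => exact Or.inl rfl
        | cons c u' =>
          injection ht with h1 h2
          subst h1
          simp at h2
          simp [h2.1]
      rcases hu' with rfl | rfl
      · simp [List.count_append, List.count_cons, hαc, hβc] at hbal
      · exact absurd (by simp [hω]) hne
  intro p hpne hppre hpneq hpsuf
  obtain ⟨q, hq⟩ := hpsuf
  have hqpre : q <+: ω := ⟨p, hq⟩
  have hωc : ω.count true = ω.count false := by
    simp [hω, List.count_append, List.count_cons, hαc, hβc]
  have hc1 : q.count true + p.count true = ω.count true := by
    rw [← hq]; simp [List.count_append]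
  have hc2 : q.count false + p.count false = ω.count false := by
    rw [← hq]; simp [List.count_append]
  have h1 := mono p hppre
  have h2 := mono q hqpre
  have hpbal : p.count false = p.count true := by omega
  have hqbal : q.count false = q.count true := by omega
  have hqneq : q ≠ ω := by
    intro h
    have := congrArg List.length hq
    rw [h] at this
    simp at this
    exact hpne this
  have hplen : p.length ≤ α.length := (key p hppre hpneq hpbal).length_le
  have hqlen : q.length ≤ α.length := (key q hqpre hqneq hqbal).length_le
  have hlen : q.length + p.length = ω.length := by rw [← hq]; simp
  have hωlen : ω.length = α.length + β.length + 2 := by simp [hω]; omega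
  have h2i : 2 * i ≤ m := by omega
  omega
end

section
/- Let m ≥ 1 be odd and let α', β' be two distinct Dyck words of length m−1. Then there exists ω ∈ CBFS₂(2m+2) such that the pair consisting of the word γ = 1·α'·0·1·β'·0 and ω is not cross-bifix-free, i.e., some nonempty proper prefix of one of γ, ω is a suffix of the other. -/
/-- auxiliary: `(10)^n` -/
def TF : ℕ → List Bool
  | 0 => []
  | n + 1 => true :: false :: TF n

lemma TF_length (n : ℕ) : (TF n).length = 2 * n := by
  induction n with
  | zero => rfl
  | succ k ih => simp [TF, ih]; omega

lemma TF_dyck (n : ℕ) : IsDyck (TF n) := by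
  induction n with
  | zero =>
    constructor
    · rfl
    · intro p hp
      simp [TF] at hp
      simp [hp]
  | succ k ih =>
    obtain ⟨ih1, ih2⟩ := ih
    constructor
    · simp [TF, List.count_cons, ih1]
    · intro p hp
      match p, hp with
      | [], _ => simp
      | [true], _ => simp
      | true :: false :: q, hp =>
        have hq : q <+: TF k := by
          simpa [TF, List.cons_prefix_cons] using hp
        have := ih2 q hq
        simp [List.count_cons]; omega
      | true :: true :: q, hp =>
        exfalso
        simp [TF, List.cons_prefix_cons] at hp
      | false :: q, hp =>
        exfalso
        simp [TF, List.cons_prefix_cons] at hp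

/-- For odd `m ≥ 1` and distinct Dyck words `α'`, `β'` of length `m-1`,
the word `γ = 1·α'·0·1·β'·0` fails to be cross-bifix-free with some word of
`CBFS₂(2m+2)`. -/
theorem excluded_word_not_crossBifixFree (m : ℕ) (hm : 1 ≤ m) (hmo : Odd m)
    (α' β' : List Bool) (hα' : DyckLen α' (m - 1)) (hβ' : DyckLen β' (m - 1))
    (hne : α' ≠ β') :
    ∃ ω ∈ CBFSevenO m,
      (∃ p : List Bool, p ≠ [] ∧ p <+: (true :: α' ++ false :: true :: β' ++ [false]) ∧
        p ≠ (true :: α' ++ false :: true :: β' ++ [false]) ∧ p <:+ ω) ∨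
      (∃ p : List Bool, p ≠ [] ∧ p <+: ω ∧ p ≠ ω ∧
        p <:+ (true :: α' ++ false :: true :: β' ++ [false])) := by
  
  obtain ⟨t, ht⟩ := hmo
  rcases Nat.eq_zero_or_pos t with ht0 | ht1
  · exfalso
    subst ht0
    have h1 : α' = [] := List.eq_nil_of_length_eq_zero (by have := hα'.2; omega)
    have h2 : β' = [] := List.eq_nil_of_length_eq_zero (by have := hβ'.2; omega)
    exact hne (h1.trans h2.symm)
  · refine ⟨TF (t + 1) ++ true :: α' ++ [false], ⟨⟨t + 1, TF (t + 1), α', ?_, ?_, ?_, rfl⟩, ?_⟩, Or.inl ⟨true :: α' ++ [false], by simp, ⟨true :: β' ++ [false], by simp⟩, ?_, ⟨TF (t + 1), by simp⟩⟩⟩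
    · omega
    · exact ⟨TF_dyck _, TF_length _⟩
    · refine ⟨hα'.1, ?_⟩
      have := hα'.2
      omega
    · rintro ⟨x, y, hx, hy, heq⟩
      have hTF : TF (t + 1) = true :: false :: TF t := rfl
      rw [hTF] at heq
      simp only [List.cons_append, List.cons.injEq] at heq
      obtain ⟨-, heq⟩ := heq
      have hxlen : x.length = m - 1 := hx.2
      match x, hxlen with
      | [], hxlen => simp at hxlen; omega
      | a :: x', _ =>
        simp only [List.cons_append, List.cons.injEq] at heq
        obtain ⟨ha, -⟩ := heq
        subst ha
        have := hx.1.2 [false] ⟨x', rfl⟩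
        simp at this
    · intro h
      have := congrArg List.length h
      simp at this
end

section
/- Let w be a binary word that begins with 1, ends with 0, and satisfies |w|₁ − |w|₀ = h with h > 0. Then w can be written as w = φ·1·α₁·1·α₂·⋯·1·α_h, where φ is a binary word with |φ|₁ = |φ|₀ that is either empty or begins with 1, each α_j (1 ≤ j ≤ h) is a Dyck word (possibly empty), and α_h is nonempty. -/
/-- Balance of a binary word. -/
def bal (w : List Bool) : ℤ := w.count true - w.count false

lemma bal_append (a b : List Bool) : bal (a ++ b) = bal a + bal b := by
  simp [bal, List.count_append]; ring

lemma bal_take_succ_le (w : List Bool) (n : ℕ) :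
    bal (w.take (n + 1)) ≤ bal (w.take n) + 1 := by
  rw [List.take_succ, bal_append]
  have h1 : (w[n]?.toList.count true : ℤ) ≤ 1 := by
    cases h : w[n]? <;> simp [List.count_cons]
    split <;> simp
  have h2 : (0 : ℤ) ≤ (w[n]?.toList.count false : ℤ) := by positivity
  simp only [bal] at *
  omega

lemma head?_of_prefix {p w : List Bool} (h : p <+: w) (hne : p ≠ []) :
    p.head? = w.head? := by
  obtain ⟨t, rfl⟩ := h
  cases p with
  | nil => exact absurd rfl hne
  | cons a l => simp

lemma getLast?_of_suffix {s w : List Bool} (h : s <:+ w) (hne : s ≠ []) :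
    s.getLast? = w.getLast? := by
  obtain ⟨t, rfl⟩ := h
  rw [List.getLast?_append]
  cases hs : s.getLast? with
  | none => exact absurd (List.getLast?_eq_none_iff.mp hs) hne
  | some b => simp

/-- Splitting lemma: a word of positive balance splits after a balanced
prefix such that everything beyond is strictly positive. -/
lemma split (w : List Bool) (hw : 0 < bal w) :
    ∃ M, M < w.length ∧ bal (w.take M) = 0 ∧
      ∀ n, M < n → n ≤ w.length → 0 < bal (w.take n) := by
  classical
  have hP0 : bal (w.take 0) ≤ 0 := by simp [bal]
  obtain hM : bal (w.take (Nat.findGreatest (fun n => bal (w.take n) ≤ 0) w.length)) ≤ 0 :=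
    Nat.findGreatest_spec (P := fun n => bal (w.take n) ≤ 0) (Nat.zero_le _) hP0
  set M := Nat.findGreatest (fun n => bal (w.take n) ≤ 0) w.length with hMdef
  have hMle : M ≤ w.length := Nat.findGreatest_le _
  have hgt : ∀ n, M < n → n ≤ w.length → 0 < bal (w.take n) := by
    intro n h1 h2
    have := Nat.findGreatest_is_greatest (P := fun n => bal (w.take n) ≤ 0) h1 h2
    omega
  have hMlt : M < w.length := by
    rcases lt_or_eq_of_le hMle with h | h
    · exact h
    · exfalso
      rw [h, List.take_length] at hM
      omega
  refine ⟨M, hMlt, ?_, hgt⟩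
  have h1 : 0 < bal (w.take (M + 1)) := hgt (M + 1) (Nat.lt_succ_self _) hMlt
  have h2 : bal (w.take (M + 1)) ≤ bal (w.take M) + 1 := bal_take_succ_le w M
  omega

lemma isDyck_of_bal {t : List Bool} (h0 : bal t = 0)
    (hp : ∀ p, p <+: t → 0 ≤ bal p) : IsDyck t := by
  constructor
  · have := h0; simp only [bal] at this; omega
  · intro p hpre
    have := hp p hpre
    simp only [bal] at this; omega

/-- Prefixes of the drop-part after a split point stay positive. -/
lemma drop_prefix_pos {w : List Bool} {M : ℕ} (hM0 : bal (w.take M) = 0)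
    (hgt : ∀ n, M < n → n ≤ w.length → 0 < bal (w.take n))
    (hMle : M ≤ w.length) :
    ∀ p, p <+: w.drop M → p ≠ [] → 0 < bal p := by
  intro p hpre hne
  have hlen : p.length ≤ w.length - M := by
    have := hpre.length_le
    simpa using this
  have hfull : (w.take M ++ p) <+: w := by
    obtain ⟨t, ht⟩ := hpre
    refine ⟨t, ?_⟩
    rw [List.append_assoc, ht, List.take_append_drop]
  have heq : w.take M ++ p = w.take (M + p.length) := by
    have := List.prefix_iff_eq_take.mp hfull
    rwa [List.length_append, List.length_take, min_eq_left hMle] at this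
  have hplen : 0 < p.length := List.length_pos_iff.mpr hne
  have := hgt (M + p.length) (by omega) (by omega)
  rw [← heq, bal_append, hM0] at this
  omega

/-- Auxiliary decomposition lemma. -/
lemma aux : ∀ N s (k : ℕ), s.length ≤ N → 1 ≤ k → bal s = k →
    (∀ p, p <+: s → p ≠ [] → 0 < bal p) → s.getLast? = some false →
    ∃ αs : List (List Bool), αs.length = k ∧ (∀ a ∈ αs, IsDyck a) ∧
      αs.getLast? ≠ some [] ∧ s = (αs.map (fun a => true :: a)).flatten := by
  intro N
  induction N with
  | zero =>
    intro s k hlen hk hbal hpre hlast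
    have hs : s = [] := List.length_eq_zero_iff.mp (Nat.le_zero.mp hlen)
    subst hs
    simp [bal] at hbal
    omega
  | succ N ih =>
    intro s k hlen hk hbal hpre hlast
    cases s with
    | nil => simp [bal] at hbal; omega
    | cons b t =>
      have hb : b = true := by
        have := hpre [b] ⟨t, rfl⟩ (by simp)
        cases b
        · simp [bal] at this
        · rfl
      subst hb
      have hbt : bal (true :: t) = 1 + bal t := by
        simp [bal, List.count_cons]; ring
      have htbal : bal t = (k : ℤ) - 1 := by omega
      have htpre : ∀ p, p <+: t → 0 ≤ bal p := by
        intro p hp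
        have h2 : (true :: p) <+: (true :: t) := by
          obtain ⟨u, hu⟩ := hp; exact ⟨u, by simp [hu]⟩
        have := hpre (true :: p) h2 (by simp)
        have hbp : bal (true :: p) = 1 + bal p := by
          simp [bal, List.count_cons]; ring
        omega
      rcases eq_or_lt_of_le hk with hk1 | hk2
      · -- k = 1 : single Dyck word t
        have ht0 : bal t = 0 := by rw [htbal, ← hk1]; simp
        have htne : t ≠ [] := by
          rintro rfl
          simp at hlast
        refine ⟨[t], ?_, ?_, ?_, ?_⟩
        · simp; omega
        · intro a ha
          simp at ha; subst ha
          exact isDyck_of_bal ht0 htpre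
        · simp [htne]
        · simp
      · -- k ≥ 2 : split t
        have htpos : 0 < bal t := by omega
        obtain ⟨M, hMlt, hM0, hgt⟩ := split t htpos
        have hrestpre : ∀ p, p <+: t.drop M → p ≠ [] → 0 < bal p :=
          drop_prefix_pos hM0 hgt (le_of_lt hMlt)
        have hsum : bal (t.take M) + bal (t.drop M) = bal t := by
          rw [← bal_append, List.take_append_drop]
        have hrestbal : bal (t.drop M) = (k : ℤ) - 1 := by omega
        have hrestne : t.drop M ≠ [] := by
          simp only [ne_eq, List.drop_eq_nil_iff]
          omega
        have hrestlast : (t.drop M).getLast? = some false := by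
          rw [getLast?_of_suffix ((List.drop_suffix M t).trans ⟨[true], rfl⟩) hrestne]
          exact hlast
        have hrestlen : (t.drop M).length ≤ N := by
          have h1 : t.length + 1 ≤ N + 1 := by simpa using hlen
          have h2 : (t.drop M).length = t.length - M := by simp
          omega
        obtain ⟨αs', hlen', hdyck', hlast', heq'⟩ :=
          ih (t.drop M) (k - 1) hrestlen (by omega) (by push_cast; omega) hrestpre hrestlast
        refine ⟨t.take M :: αs', by simp [hlen']; omega, ?_, ?_, ?_⟩
        · intro a ha
          rcases List.mem_cons.mp ha with rfl | ha'
          · refine isDyck_of_bal hM0 ?_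
            intro p hp
            exact htpre p (hp.trans (List.take_prefix M t))
          · exact hdyck' a ha'
        · cases αs' with
          | nil => exfalso; simp at hlen'; omega
          | cons x l => rw [List.getLast?_cons_cons]; exact hlast'
        · simp only [List.map_cons, List.flatten_cons, ← heq']
          rw [List.cons_append, List.take_append_drop]

/-- A binary word beginning with 1, ending with 0, with `h > 0` more 1s
than 0s, decomposes as `φ·1·α₁·1·α₂·⋯·1·α_h` where `φ` is balanced and empty or begins
with 1, each `α_j` is a (possibly empty) Dyck word, and `α_h` is nonempty. -/
theorem decomposition_pos_height (w : List Bool) (h : ℕ) (hh : 0 < h)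
    (hhd : w.head? = some true) (hlast : w.getLast? = some false)
    (hcount : w.count true = w.count false + h) :
    ∃ (φ : List Bool) (αs : List (List Bool)),
      αs.length = h ∧
      φ.count true = φ.count false ∧
      (φ = [] ∨ φ.head? = some true) ∧
      (∀ a ∈ αs, IsDyck a) ∧
      αs.getLast? ≠ some [] ∧
      w = φ ++ (αs.map (fun a => true :: a)).flatten := by
  have hwbal : bal w = h := by simp only [bal]; omega
  have hwpos : 0 < bal w := by omega
  obtain ⟨M, hMlt, hM0, hgt⟩ := split w hwpos
  have hspre : ∀ p, p <+: w.drop M → p ≠ [] → 0 < bal p :=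
    drop_prefix_pos hM0 hgt (le_of_lt hMlt)
  have hsum : bal (w.take M) + bal (w.drop M) = bal w := by
    rw [← bal_append, List.take_append_drop]
  have hsbal : bal (w.drop M) = (h : ℤ) := by omega
  have hsne : w.drop M ≠ [] := by
    simp only [ne_eq, List.drop_eq_nil_iff]; omega
  have hslast : (w.drop M).getLast? = some false := by
    rw [getLast?_of_suffix (List.drop_suffix M w) hsne]; exact hlast
  obtain ⟨αs, hlen, hdyck, hlast', heq⟩ :=
    aux (w.drop M).length (w.drop M) h le_rfl hh hsbal hspre hslast
  refine ⟨w.take M, αs, hlen, ?_, ?_, hdyck, hlast', ?_⟩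
  · simp only [bal] at hM0; omega
  · by_cases hφe : w.take M = []
    · exact Or.inl hφe
    · right
      rw [head?_of_prefix (List.take_prefix M w) hφe]; exact hhd
  · rw [← heq, List.take_append_drop]
end

section
/- Let q ≥ 1 and let BF_q(n) denote the set of all bifix-free words of length n over an alphabet of size q. Then |BF_q(1)| = q, and for every n ≥ 1, |BF_q(2n+1)| = q·|BF_q(2n)| and |BF_q(2n)| = q·|BF_q(2n−1)| − |BF_q(n)|. -/
/-- The set of bifix-free words of length `n` over an alphabet of size `q`. -/
def BFq (q n : ℕ) : Set (List (Fin q)) := {w | w.length = n ∧ BifixFree w}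

/-!
If a word of length `L` has a border of length `k > L / 2`, the prefix and the suffix of
length `k` overlap, and the overlap is a border of length `2k - L`. Hence bifix-freeness only
depends on the borders of length at most `L / 2`, and these do not see a letter inserted in the
middle of the word. So inserting each of the `q` letters in the middle of the bifix-free words of
length `2n` yields each bifix-free word of length `2n + 1` once. Inserting them in the middle of
the bifix-free words of length `2n - 1` yields the words of length `2n` without borders of length
`< n`: the bifix-free words of length `2n` together with the squares `xx` of the bifix-free words
`x` of length `n`.
-/

variable {α : Type*}

theorem List.drop_insertIdx_of_lt {l : List α} {n j : ℕ} (a : α) (hn : n < j)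
    (hj : j ≤ l.length + 1) : (l.insertIdx n a).drop j = l.drop (j - 1) :=
  List.ext_getElem (by grind) (by grind)

def HasBorder (w : List α) (k : ℕ) : Prop := w.take k = w.drop (w.length - k)

theorem bifixFree_iff_forall_not_hasBorder {w : List α} :
    BifixFree w ↔ ∀ k, 0 < k → k < w.length → ¬ HasBorder w k := by
  constructor
  · intro h k hk hkw hb
    have hlen : (w.take k).length = k := List.length_take_of_le hkw.le
    refine h (w.take k) (List.length_pos_iff.1 (by rw [hlen]; exact hk)) (List.take_prefix k w)
      (fun he => by rw [he] at hlen; omega) ?_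
    rw [hb]
    exact List.drop_suffix _ w
  · intro h p hp hpre hpw hsuf
    have hlt : p.length < w.length := lt_of_le_of_ne hpre.length_le (mt hpre.eq_of_length hpw)
    refine h p.length (List.length_pos_iff.2 hp) hlt ?_
    rw [HasBorder, ← List.prefix_iff_eq_take.mp hpre, ← List.suffix_iff_eq_drop.mp hsuf]

theorem HasBorder.two_mul_sub {w : List α} {k : ℕ} (hb : HasBorder w k) (hk : k ≤ w.length)
    (hk' : w.length ≤ 2 * k) : HasBorder w (2 * k - w.length) := by
  obtain ⟨d, hd⟩ : ∃ d, w.length - k = d := ⟨_, rfl⟩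
  have hb' : w.take k = w.drop d := hd ▸ hb
  have key : w.take (k - d) = w.drop (d + d) :=
    calc w.take (k - d) = (w.take k).take (k - d) := by
          rw [List.take_take, min_eq_left (by omega)]
      _ = (w.drop d).take (k - d) := by rw [hb']
      _ = (w.take k).drop d := List.drop_take.symm
      _ = w.drop (d + d) := by rw [hb', List.drop_drop]
  rw [HasBorder, show 2 * k - w.length = k - d by omega, show w.length - (k - d) = d + d by omega]
  exact key

theorem exists_hasBorder_two_mul_le {w : List α} {k : ℕ} (hk : 0 < k) (hkw : k < w.length)
    (hb : HasBorder w k) : ∃ j, 0 < j ∧ 2 * j ≤ w.length ∧ HasBorder w j := by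
  induction k using Nat.strong_induction_on with
  | _ k ih =>
    by_cases h : 2 * k ≤ w.length
    · exact ⟨k, hk, h, hb⟩
    · exact ih _ (by omega) (by omega) (by omega) (hb.two_mul_sub hkw.le (by omega))

theorem bifixFree_iff_forall_two_mul_le {w : List α} :
    BifixFree w ↔ ∀ k, 0 < k → 2 * k ≤ w.length → ¬ HasBorder w k := by
  rw [bifixFree_iff_forall_not_hasBorder]
  refine ⟨fun h k hk hkw => h k hk (by omega), fun h k hk hkw hb => ?_⟩
  obtain ⟨j, hj, hjw, hbj⟩ := exists_hasBorder_two_mul_le hk hkw hb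
  exact h j hj hjw hbj

theorem hasBorder_congr {w w' : List α} {m k : ℕ} (hm : m ≤ w.length) (hm' : m ≤ w'.length)
    (htake : w.take m = w'.take m) (hdrop : w.drop (w.length - m) = w'.drop (w'.length - m))
    (hk : k ≤ m) : HasBorder w k ↔ HasBorder w' k := by
  have take_eq (v : List α) : v.take k = (v.take m).take k := by
    rw [List.take_take, min_eq_left hk]
  have drop_eq (v : List α) (hv : m ≤ v.length) :
      v.drop (v.length - k) = (v.drop (v.length - m)).drop (m - k) := by
    rw [List.drop_drop]; congr 1; omega
  rw [HasBorder, HasBorder, take_eq w, take_eq w', drop_eq w hm, drop_eq w' hm', htake, hdrop]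

theorem hasBorder_insertIdx_iff {w : List α} {n k : ℕ} (a : α) (hn : 2 * n ≤ w.length)
    (hk : k ≤ n) : HasBorder (w.insertIdx n a) k ↔ HasBorder w k := by
  have hlen := List.length_insertIdx_of_le_length (show n ≤ w.length by omega) a
  refine hasBorder_congr (by omega) (by omega) (List.take_insertIdx_eq_take_of_le _ _ _ _ le_rfl)
    ?_ hk
  rw [hlen, List.drop_insertIdx_of_lt a (by omega) (by omega)]
  congr 1
  omega

theorem forall_not_hasBorder_insertIdx_iff {w : List α} {n : ℕ} (a : α)
    (h₁ : 2 * n ≤ w.length) (h₂ : w.length ≤ 2 * n + 1) :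
    (∀ k, 0 < k → k ≤ n → ¬ HasBorder (w.insertIdx n a) k) ↔ BifixFree w := by
  rw [bifixFree_iff_forall_two_mul_le]
  refine forall_congr' fun k => imp_congr_right fun _ => ?_
  rw [show 2 * k ≤ w.length ↔ k ≤ n by omega]
  exact imp_congr_right fun hk => not_congr (hasBorder_insertIdx_iff a h₁ hk)

theorem bifixFree_insertIdx_iff {w : List α} {n : ℕ} (a : α) (hw : w.length = 2 * n) :
    BifixFree (w.insertIdx n a) ↔ BifixFree w := by
  rw [← forall_not_hasBorder_insertIdx_iff a hw.ge (by omega), bifixFree_iff_forall_two_mul_le,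
    List.length_insertIdx_of_le_length (by omega), hw]
  exact forall_congr' fun k => imp_congr_right fun _ => by
    rw [show 2 * k ≤ 2 * n + 1 ↔ k ≤ n by omega]

theorem hasBorder_append_self_iff {x : List α} {k : ℕ} (hk : k ≤ x.length) :
    HasBorder (x ++ x) k ↔ HasBorder x k :=
  hasBorder_congr (by simp) le_rfl (List.take_left' rfl |>.trans (List.take_length).symm)
    (by simp) hk

theorem hasBorder_append_self (x : List α) : HasBorder (x ++ x) x.length := by
  simp [HasBorder]

theorem forall_not_hasBorder_lt_iff {w : List α} {n : ℕ} (hw : w.length = 2 * n) :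
    (∀ k, 0 < k → k < n → ¬ HasBorder w k) ↔
      BifixFree w ∨ ∃ x, x.length = n ∧ BifixFree x ∧ w = x ++ x := by
  constructor
  · intro h
    by_cases hn : HasBorder w n
    · set x := w.take n
      have hx : x.length = n := List.length_take_of_le (by omega)
      have hdrop : x = w.drop n := by
        have hn' : x = w.drop (w.length - n) := hn
        rwa [show w.length - n = n by omega] at hn'
      have hsq : w = x ++ x := by
        conv_lhs => rw [← List.take_append_drop n w, ← hdrop]
      refine Or.inr ⟨x, hx, bifixFree_iff_forall_not_hasBorder.2 fun k hk hkn hb => ?_, hsq⟩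
      exact h k hk (by omega) (hsq ▸ (hasBorder_append_self_iff hkn.le).2 hb)
    · refine Or.inl (bifixFree_iff_forall_two_mul_le.2 fun k hk hkn => ?_)
      obtain hkn | rfl := (show k < n ∨ k = n by omega)
      · exact h k hk hkn
      · exact hn
  · rintro (hbf | ⟨x, hx, hbf, rfl⟩) k hk hkn
    · exact bifixFree_iff_forall_not_hasBorder.1 hbf k hk (by omega)
    · rw [hasBorder_append_self_iff (by omega)]
      exact bifixFree_iff_forall_not_hasBorder.1 hbf k hk (by omega)

theorem ncard_eq_card_mul_of_insertIdx {S T : Set (List α)} {L n : ℕ} (hn : n ≤ L)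
    (hS : ∀ w ∈ S, w.length = L) (hT : ∀ w ∈ T, w.length = L + 1)
    (hmem : ∀ a w, w.length = L → (w.insertIdx n a ∈ T ↔ w ∈ S)) :
    T.ncard = Nat.card α * S.ncard := by
  let f : α × List α → List α := fun p => p.2.insertIdx n p.1
  have himage : f '' (Set.univ ×ˢ S) = T := by
    ext w'
    constructor
    · rintro ⟨⟨a, w⟩, ⟨-, hw⟩, rfl⟩
      exact (hmem a w (hS w hw)).2 hw
    · intro hw'
      have hlt : n < w'.length := by have := hT w' hw'; omega
      have hins : (w'.eraseIdx n).insertIdx n w'[n] = w' := List.insertIdx_eraseIdx_getElem hlt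
      have hlen : (w'.eraseIdx n).length = L := by
        rw [List.length_eraseIdx_of_lt hlt, hT w' hw', Nat.add_sub_cancel]
      exact ⟨(w'[n], w'.eraseIdx n), ⟨trivial, (hmem _ _ hlen).1 (hins ▸ hw')⟩, hins⟩
  have hinj : Set.InjOn f (Set.univ ×ˢ S) := by
    rintro ⟨a, w⟩ ⟨-, hw⟩ ⟨b, v⟩ ⟨-, hv⟩ h
    have hab : some a = some b := by
      have hnw : n ≤ w.length := hS w hw ▸ hn
      have hnv : n ≤ v.length := hS v hv ▸ hn
      simpa [f, List.getElem?_insertIdx, hnw, hnv] using congrArg (·[n]?) h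
    have hwv : w = v := by simpa [f] using congrArg (List.eraseIdx · n) h
    rw [Option.some_inj.1 hab, hwv]
  rw [← himage, hinj.ncard_image, Set.ncard_prod, Set.ncard_univ]

theorem finite_BFq (q n : ℕ) : (BFq q n).Finite :=
  (List.finite_length_eq (Fin q) n).subset fun _ hw => hw.1

theorem ncard_BFq_zero (q : ℕ) : (BFq q 0).ncard = 1 := by
  rw [Set.ncard_eq_one]
  refine ⟨[], Set.eq_singleton_iff_unique_mem.2
    ⟨⟨rfl, ?_⟩, fun w hw => List.eq_nil_of_length_eq_zero hw.1⟩⟩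
  exact bifixFree_iff_forall_not_hasBorder.2 fun k hk hk0 => absurd hk0 (by simp)

theorem ncard_BFq_two_mul_add_one (q n : ℕ) :
    (BFq q (2 * n + 1)).ncard = q * (BFq q (2 * n)).ncard := by
  have hmem (a : Fin q) (w : List (Fin q)) (hw : w.length = 2 * n) :
      w.insertIdx n a ∈ BFq q (2 * n + 1) ↔ w ∈ BFq q (2 * n) :=
    and_congr (by simp [List.length_insertIdx_of_le_length (by omega : n ≤ w.length), hw])
      (bifixFree_insertIdx_iff a hw)
  simpa using ncard_eq_card_mul_of_insertIdx (by omega) (fun w hw => hw.1) (fun w hw => hw.1) hmem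

def noShortBorderWords (q n : ℕ) : Set (List (Fin q)) :=
  {w | w.length = 2 * n ∧ ∀ k, 0 < k → k < n → ¬ HasBorder w k}

theorem ncard_noShortBorderWords_succ (q m : ℕ) :
    (noShortBorderWords q (m + 1)).ncard = q * (BFq q (2 * m + 1)).ncard := by
  have hmem (a : Fin q) (w : List (Fin q)) (hw : w.length = 2 * m + 1) :
      w.insertIdx m a ∈ noShortBorderWords q (m + 1) ↔ w ∈ BFq q (2 * m + 1) := by
    refine and_congr ?_ ?_
    · simp [List.length_insertIdx_of_le_length (by omega : m ≤ w.length), hw]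
      omega
    · simp only [Nat.lt_add_one_iff]
      exact forall_not_hasBorder_insertIdx_iff a (by omega) hw.le
  simpa using ncard_eq_card_mul_of_insertIdx (by omega) (fun w hw => hw.1) (fun w hw => hw.1) hmem

theorem noShortBorderWords_eq_union (q n : ℕ) :
    noShortBorderWords q n = BFq q (2 * n) ∪ (fun x => x ++ x) '' BFq q n := by
  ext w
  simp only [Set.mem_union, Set.mem_image]
  constructor
  · rintro ⟨hw, h⟩
    rcases (forall_not_hasBorder_lt_iff hw).1 h with hbf | ⟨x, hx, hbf, rfl⟩
    · exact Or.inl ⟨hw, hbf⟩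
    · exact Or.inr ⟨x, ⟨hx, hbf⟩, rfl⟩
  · rintro (⟨hw, hbf⟩ | ⟨x, ⟨hx, hbf⟩, rfl⟩)
    · exact ⟨hw, (forall_not_hasBorder_lt_iff hw).2 (Or.inl hbf)⟩
    · have hw : (x ++ x).length = 2 * n := by simp [hx]; omega
      exact ⟨hw, (forall_not_hasBorder_lt_iff hw).2 (Or.inr ⟨x, hx, hbf, rfl⟩)⟩

theorem disjoint_BFq_image_append_self {q n : ℕ} (hn : 0 < n) :
    Disjoint (BFq q (2 * n)) ((fun x => x ++ x) '' BFq q n) := by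
  rw [Set.disjoint_left]
  rintro _ ⟨-, hbf⟩ ⟨x, ⟨rfl, -⟩, rfl⟩
  exact bifixFree_iff_forall_not_hasBorder.1 hbf x.length hn (by simp; omega)
    (hasBorder_append_self x)

theorem ncard_noShortBorderWords {q n : ℕ} (hn : 0 < n) :
    (noShortBorderWords q n).ncard = (BFq q (2 * n)).ncard + (BFq q n).ncard := by
  have hinj : Set.InjOn (fun x => x ++ x) (BFq q n) := fun x hx y hy h =>
    (List.append_inj h (hx.1.trans hy.1.symm)).1
  rw [noShortBorderWords_eq_union, Set.ncard_union_eq (disjoint_BFq_image_append_self hn)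
    (finite_BFq q (2 * n)) ((finite_BFq q n).image _), hinj.ncard_image]

theorem BFq_card_recurrence_general (q : ℕ) :
    (BFq q 1).ncard = q ∧
    ∀ n : ℕ, 1 ≤ n →
      (BFq q (2 * n + 1)).ncard = q * (BFq q (2 * n)).ncard ∧
      (BFq q (2 * n)).ncard = q * (BFq q (2 * n - 1)).ncard - (BFq q n).ncard := by
  refine ⟨by simpa [ncard_BFq_zero] using ncard_BFq_two_mul_add_one q 0,
    fun n hn => ⟨ncard_BFq_two_mul_add_one q n, ?_⟩⟩
  obtain ⟨m, rfl⟩ := Nat.exists_eq_add_of_le' hn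
  have h := ncard_noShortBorderWords_succ q m
  rw [ncard_noShortBorderWords (by omega)] at h
  rw [show 2 * (m + 1) - 1 = 2 * m + 1 by omega]
  omega

/-- `|BF_q(1)| = q`, and for `n ≥ 1`, `|BF_q(2n+1)| = q·|BF_q(2n)|` and
`|BF_q(2n)| = q·|BF_q(2n-1)| − |BF_q(n)|`. -/
theorem BFq_card_recurrence (q : ℕ) (hq : 1 ≤ q) :
    (BFq q 1).ncard = q ∧
    ∀ n : ℕ, 1 ≤ n →
      (BFq q (2 * n + 1)).ncard = q * (BFq q (2 * n)).ncard ∧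
      (BFq q (2 * n)).ncard = q * (BFq q (2 * n - 1)).ncard - (BFq q n).ncard :=
  BFq_card_recurrence_general q
end
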